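/- arXiv:2010.14800 — 2 statements merged into one kernel-verified Lean document; each statement's English description precedes it below -/
import Mathlib

section
/- Let $l_1 < l_2$ and let $\varphi, \psi : [l_1,l_2] \to \mathbb{R}$ be twice continuously differentiable, not both identically zero, satisfying $\varphi'' - \varphi + \varphi\psi = 0$, $\psi'' - \alpha\psi + \frac{1}{2}\varphi^2 = 0$ with zero Dirichlet boundary conditions at $l_1, l_2$. Define $\|u\|_1^2 = \int_{l_1}^{l_2}(u^2 + u'^2)\,dx$. If $\alpha < 1$ then $\|\varphi\|_1^2 < 2\|\psi\|_1^2$; if $\alpha = 1$ then $\|\varphi\|_1^2 = 2\|\psi\|_1^2$; if $\alpha > 1$ then $\|\varphi\|_1^2 > 2\|\psi\|_1^2$, where in the strict inequality cases we additionally assume $\psi$ is not identically zero. -/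
/-!
Testing the first equation against `φ` and the second against `ψ` and integrating by parts
(the boundary terms vanish) gives the energy identities
`‖φ‖₁² = ∫ φ²ψ` and `∫ φ²ψ = 2α ∫ ψ² + 2 ∫ ψ'²`, hence `‖φ‖₁² - 2‖ψ‖₁² = 2(α - 1) ∫ ψ²`.
-/

open Set MeasureTheory intervalIntegral
open scoped Interval

section Dirichlet

variable {a b : ℝ} {u u' u'' : ℝ → ℝ}

theorem integral_mul_deriv_deriv_of_eq_zero
    (hu : ∀ x ∈ [[a, b]], HasDerivAt u (u' x) x) (hu' : ∀ x ∈ [[a, b]], HasDerivAt u' (u'' x) x)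
    (hu'' : IntervalIntegrable u'' volume a b) (ha : u a = 0) (hb : u b = 0) :
    ∫ x in a..b, u x * u'' x = -∫ x in a..b, u' x ^ 2 := by
  have hu'_cont : ContinuousOn u' [[a, b]] :=
    continuousOn_of_forall_continuousAt fun x hx => (hu' x hx).continuousAt
  rw [integral_mul_deriv_eq_deriv_mul hu hu' hu'_cont.intervalIntegrable hu'', ha, hb]
  simp only [sq, zero_mul, sub_zero, zero_sub]

theorem integral_sq_add_deriv_sq_of_eq_zero {c : ℝ} {w : ℝ → ℝ}
    (hu : ∀ x ∈ [[a, b]], HasDerivAt u (u' x) x) (hu' : ∀ x ∈ [[a, b]], HasDerivAt u' (u'' x) x)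
    (hw : ContinuousOn w [[a, b]]) (hode : ∀ x ∈ [[a, b]], u'' x - c * u x + w x = 0)
    (ha : u a = 0) (hb : u b = 0) :
    ∫ x in a..b, (u x ^ 2 + u' x ^ 2) =
      (∫ x in a..b, u x * w x) + (1 - c) * ∫ x in a..b, u x ^ 2 := by
  have hu_cont : ContinuousOn u [[a, b]] :=
    continuousOn_of_forall_continuousAt fun x hx => (hu x hx).continuousAt
  have hu'_cont : ContinuousOn u' [[a, b]] :=
    continuousOn_of_forall_continuousAt fun x hx => (hu' x hx).continuousAt
  have hu''_eq : EqOn u'' (fun x => c * u x - w x) [[a, b]] := fun x hx => by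
    linear_combination hode x hx
  have hu''_int : IntervalIntegrable u'' volume a b :=
    (((continuousOn_const.mul hu_cont).sub hw).congr hu''_eq).intervalIntegrable
  have husq : IntervalIntegrable (fun x => u x ^ 2) volume a b := (hu_cont.pow 2).intervalIntegrable
  have huw : IntervalIntegrable (fun x => u x * w x) volume a b :=
    (hu_cont.mul hw).intervalIntegrable
  have htest :
      ∫ x in a..b, u x * u'' x = c * (∫ x in a..b, u x ^ 2) - ∫ x in a..b, u x * w x := by
    rw [← intervalIntegral.integral_const_mul, ← integral_sub (husq.const_mul c) huw]
    exact integral_congr fun x hx => by simp only [hu''_eq hx]; ring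
  have hu'sq : IntervalIntegrable (fun x => u' x ^ 2) volume a b :=
    (hu'_cont.pow 2).intervalIntegrable
  rw [integral_add husq hu'sq]
  linarith [integral_mul_deriv_deriv_of_eq_zero hu hu' hu''_int ha hb]

end Dirichlet

theorem sobolev_norm_trichotomy_general (l1 l2 α : ℝ) (hl : l1 < l2)
    (φ φ' φ'' ψ ψ' ψ'' : ℝ → ℝ)
    (hφ1 : ∀ x ∈ Set.Icc l1 l2, HasDerivAt φ (φ' x) x)
    (hφ2 : ∀ x ∈ Set.Icc l1 l2, HasDerivAt φ' (φ'' x) x)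
    (hψ1 : ∀ x ∈ Set.Icc l1 l2, HasDerivAt ψ (ψ' x) x)
    (hψ2 : ∀ x ∈ Set.Icc l1 l2, HasDerivAt ψ' (ψ'' x) x)
    (hode1 : ∀ x ∈ Set.Icc l1 l2, φ'' x - φ x + φ x * ψ x = 0)
    (hode2 : ∀ x ∈ Set.Icc l1 l2, ψ'' x - α * ψ x + (1 / 2) * φ x ^ 2 = 0)
    (hbc : φ l1 = 0 ∧ φ l2 = 0 ∧ ψ l1 = 0 ∧ ψ l2 = 0) :
    (α < 1 → (∃ x ∈ Set.Icc l1 l2, ψ x ≠ 0) →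
      (∫ x in l1..l2, (φ x ^ 2 + φ' x ^ 2)) < 2 * ∫ x in l1..l2, (ψ x ^ 2 + ψ' x ^ 2)) ∧
    (α = 1 →
      (∫ x in l1..l2, (φ x ^ 2 + φ' x ^ 2)) = 2 * ∫ x in l1..l2, (ψ x ^ 2 + ψ' x ^ 2)) ∧
    (α > 1 → (∃ x ∈ Set.Icc l1 l2, ψ x ≠ 0) →
      (∫ x in l1..l2, (φ x ^ 2 + φ' x ^ 2)) > 2 * ∫ x in l1..l2, (ψ x ^ 2 + ψ' x ^ 2)) := by
  obtain ⟨hφa, hφb, hψa, hψb⟩ := hbc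
  rw [← uIcc_of_le hl.le] at hφ1 hφ2 hψ1 hψ2 hode1 hode2
  have hφ_cont : ContinuousOn φ [[l1, l2]] :=
    continuousOn_of_forall_continuousAt fun x hx => (hφ1 x hx).continuousAt
  have hψ_cont : ContinuousOn ψ [[l1, l2]] :=
    continuousOn_of_forall_continuousAt fun x hx => (hψ1 x hx).continuousAt
  have hφ_energy := integral_sq_add_deriv_sq_of_eq_zero (c := 1) (w := fun x => φ x * ψ x)
    hφ1 hφ2 (hφ_cont.mul hψ_cont) (fun x hx => by linear_combination hode1 x hx) hφa hφb
  have hψ_energy := integral_sq_add_deriv_sq_of_eq_zero (w := fun x => 1 / 2 * φ x ^ 2)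
    hψ1 hψ2 (continuousOn_const.mul (hφ_cont.pow 2)) hode2 hψa hψb
  have hcoupling :
      ∫ x in l1..l2, φ x * (φ x * ψ x) = 2 * ∫ x in l1..l2, ψ x * (1 / 2 * φ x ^ 2) := by
    rw [← intervalIntegral.integral_const_mul]
    exact integral_congr fun x _ => by ring
  have key : ∫ x in l1..l2, (φ x ^ 2 + φ' x ^ 2)
      = 2 * (∫ x in l1..l2, (ψ x ^ 2 + ψ' x ^ 2)) + 2 * (α - 1) * ∫ x in l1..l2, ψ x ^ 2 := by
    rw [hφ_energy, hψ_energy, hcoupling]; ring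
  have hψ_sq_pos : (∃ x ∈ Icc l1 l2, ψ x ≠ 0) → 0 < ∫ x in l1..l2, ψ x ^ 2 :=
    fun ⟨x, hx, hψx⟩ =>
      integral_pos hl (by rw [← uIcc_of_le hl.le]; exact hψ_cont.pow 2) (fun _ _ => sq_nonneg _)
        ⟨x, hx, by positivity⟩
  refine ⟨fun hα hψ0 => ?_, fun hα => ?_, fun hα hψ0 => ?_⟩
  · nlinarith [mul_pos (sub_pos.2 hα) (hψ_sq_pos hψ0)]
  · rw [key, hα]; ring
  · nlinarith [mul_pos (sub_pos.2 hα) (hψ_sq_pos hψ0)]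

theorem sobolev_norm_trichotomy (l1 l2 α : ℝ) (hl : l1 < l2)
    (φ φ' φ'' ψ ψ' ψ'' : ℝ → ℝ)
    (hφ1 : ∀ x ∈ Set.Icc l1 l2, HasDerivAt φ (φ' x) x)
    (hφ2 : ∀ x ∈ Set.Icc l1 l2, HasDerivAt φ' (φ'' x) x)
    (hψ1 : ∀ x ∈ Set.Icc l1 l2, HasDerivAt ψ (ψ' x) x)
    (hψ2 : ∀ x ∈ Set.Icc l1 l2, HasDerivAt ψ' (ψ'' x) x)
    (hφ''c : ContinuousOn φ'' (Set.Icc l1 l2)) (hψ''c : ContinuousOn ψ'' (Set.Icc l1 l2))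
    (hode1 : ∀ x ∈ Set.Icc l1 l2, φ'' x - φ x + φ x * ψ x = 0)
    (hode2 : ∀ x ∈ Set.Icc l1 l2, ψ'' x - α * ψ x + (1 / 2) * φ x ^ 2 = 0)
    (hbc : φ l1 = 0 ∧ φ l2 = 0 ∧ ψ l1 = 0 ∧ ψ l2 = 0)
    (hnz : ¬ ∀ x ∈ Set.Icc l1 l2, φ x = 0 ∧ ψ x = 0) :
    (α < 1 → (∃ x ∈ Set.Icc l1 l2, ψ x ≠ 0) →
      (∫ x in l1..l2, (φ x ^ 2 + φ' x ^ 2)) < 2 * ∫ x in l1..l2, (ψ x ^ 2 + ψ' x ^ 2)) ∧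
    (α = 1 →
      (∫ x in l1..l2, (φ x ^ 2 + φ' x ^ 2)) = 2 * ∫ x in l1..l2, (ψ x ^ 2 + ψ' x ^ 2)) ∧
    (α > 1 → (∃ x ∈ Set.Icc l1 l2, ψ x ≠ 0) →
      (∫ x in l1..l2, (φ x ^ 2 + φ' x ^ 2)) > 2 * ∫ x in l1..l2, (ψ x ^ 2 + ψ' x ^ 2)) :=
  sobolev_norm_trichotomy_general l1 l2 α hl φ φ' φ'' ψ ψ' ψ'' hφ1 hφ2 hψ1 hψ2 hode1 hode2 hbc
end

section
/- For any $c_2 \in \mathbb{R}$, the pair $\varphi(x) = \frac{3}{\sqrt{2}}\left(1 - \tanh^2\left(\frac{x+c_2}{2}\right)\right)$ and $\psi(x) = \frac{3}{2}\left(1 - \tanh^2\left(\frac{x+c_2}{2}\right)\right)$ satisfies the coupled system $\varphi'' - \varphi + \varphi\psi = 0$ and $\psi'' - \psi + \frac{1}{2}\varphi^2 = 0$ on $\mathbb{R}$. -/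
/-! With `t = tanh ((x + c) / 2)` we have `t' = (1 - t²) / 2`, so `u = 1 - t²` satisfies
`u' = t³ - t` and `u'' = (3t² - 1)(1 - t²) / 2 = u - (3/2) u²`. Hence `ψ = (3/2) u` solves
`ψ'' = ψ - ψ²`, and since `φ = √2 ψ` both equations of the system reduce to this one. -/

open Real

theorem Real.hasDerivAt_tanh (x : ℝ) : HasDerivAt tanh (1 - tanh x ^ 2) x := by
  have hcosh : cosh x ≠ 0 := (cosh_pos x).ne'
  have h := (hasDerivAt_sinh x).div (hasDerivAt_cosh x) hcosh
  rw [show sinh / cosh = tanh from funext fun y => (tanh_eq_sinh_div_cosh y).symm] at h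
  refine h.congr_deriv ?_
  rw [tanh_eq_sinh_div_cosh]
  field_simp

lemma hasDerivAt_tanh_add_div_two (c x : ℝ) :
    HasDerivAt (fun y => tanh ((y + c) / 2)) ((1 - tanh ((x + c) / 2) ^ 2) / 2) x := by
  have hinner : HasDerivAt (fun y : ℝ => (y + c) / 2) (1 / 2) x :=
    ((hasDerivAt_id x).add_const c).div_const 2
  exact ((hasDerivAt_tanh _).comp x hinner).congr_deriv (by ring)

lemma deriv_one_sub_tanh_add_div_two_sq (c : ℝ) :
    deriv (fun y => 1 - tanh ((y + c) / 2) ^ 2) =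
      fun y => tanh ((y + c) / 2) ^ 3 - tanh ((y + c) / 2) := by
  funext x
  refine (((hasDerivAt_tanh_add_div_two c x).pow 2).const_sub 1).deriv.trans ?_
  push_cast
  ring

lemma deriv_deriv_one_sub_tanh_add_div_two_sq (c x : ℝ) :
    deriv (deriv fun y => 1 - tanh ((y + c) / 2) ^ 2) x =
      (1 - tanh ((x + c) / 2) ^ 2) - 3 / 2 * (1 - tanh ((x + c) / 2) ^ 2) ^ 2 := by
  have h := hasDerivAt_tanh_add_div_two c x
  rw [deriv_one_sub_tanh_add_div_two_sq]
  refine ((h.fun_pow 3).fun_sub h).deriv.trans ?_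
  push_cast
  ring

lemma deriv_deriv_const_mul_one_sub_tanh_add_div_two_sq (a c x : ℝ) :
    deriv (deriv fun y => a * (1 - tanh ((y + c) / 2) ^ 2)) x =
      a * ((1 - tanh ((x + c) / 2) ^ 2) - 3 / 2 * (1 - tanh ((x + c) / 2) ^ 2) ^ 2) := by
  simp only [deriv_const_mul_field']
  exact congrArg (a * ·) (deriv_deriv_one_sub_tanh_add_div_two_sq c x)

theorem exact_pair_solution (c2 : ℝ) :
    (∀ x : ℝ,
      deriv (deriv (fun y => (3 / Real.sqrt 2) * (1 - Real.tanh ((y + c2) / 2) ^ 2))) x -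
        (3 / Real.sqrt 2) * (1 - Real.tanh ((x + c2) / 2) ^ 2) +
        ((3 / Real.sqrt 2) * (1 - Real.tanh ((x + c2) / 2) ^ 2)) *
          ((3 / 2) * (1 - Real.tanh ((x + c2) / 2) ^ 2)) = 0) ∧
    (∀ x : ℝ,
      deriv (deriv (fun y => (3 / 2) * (1 - Real.tanh ((y + c2) / 2) ^ 2))) x -
        (3 / 2) * (1 - Real.tanh ((x + c2) / 2) ^ 2) +
        (1 / 2) * ((3 / Real.sqrt 2) * (1 - Real.tanh ((x + c2) / 2) ^ 2)) ^ 2 = 0) := by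
  have hsq : (3 / √2) ^ 2 = 9 / 2 := by
    rw [div_pow, sq_sqrt zero_le_two]
    norm_num
  refine ⟨fun x => ?_, fun x => ?_⟩
  · rw [deriv_deriv_const_mul_one_sub_tanh_add_div_two_sq]
    ring
  · rw [deriv_deriv_const_mul_one_sub_tanh_add_div_two_sq, mul_pow, hsq]
    ring
end
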